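/- (Power-constraint tightness, Theorem 1) Consider maximizing F(ρ, p) = (1/ρ)·log₂(1 + U p/(I+v)) over (ρ, p) subject to p + g(ρ)p₀ ≤ p_max, p ≥ 0, ρ_min ≤ ρ ≤ 1, where g is continuous and strictly decreasing, p₀ > 0, and g(ρ_min)p₀ ≥ p_max. Then at any maximizer (ρ*, p*) the power constraint is tight: p* + g(ρ*)p₀ = p_max. -/

import Mathlib

/-! If the budget were slack at a maximizer with `ρ* > 0`, raising `p` to exhaust it would
strictly increase the rate and hence `F`. If `ρ* ≤ 0`, then `F ρ* p* ≤ 0` (with `1 / 0 = 0`),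
whereas `ρ = 1` with the remaining budget `p_max - g 1 · p₀` is feasible and gives `F > 0`:
since `g` is strictly decreasing, this budget exceeds the slack one at `ρ*`, so it is positive. -/

section Rate

variable {U c : ℝ}

lemma logb_one_add_mul_div_strictMonoOn (hU : 0 < U) (hc : 0 < c) :
    StrictMonoOn (fun p => Real.logb 2 (1 + U * p / c)) (Set.Ici 0) := by
  intro p hp q _ hpq
  rw [Set.mem_Ici] at hp
  exact Real.logb_lt_logb one_lt_two (by positivity) (by gcongr)

lemma logb_one_add_mul_div_pos (hU : 0 < U) (hc : 0 < c) {p : ℝ} (hp : 0 < p) :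
    0 < Real.logb 2 (1 + U * p / c) := by
  simpa using logb_one_add_mul_div_strictMonoOn hU hc Set.self_mem_Ici hp.le hp

lemma one_div_mul_logb_one_add_nonpos (hU : 0 < U) (hc : 0 < c) {ρ p : ℝ} (hρ : ρ ≤ 0)
    (hp : 0 ≤ p) : 1 / ρ * Real.logb 2 (1 + U * p / c) ≤ 0 :=
  mul_nonpos_of_nonpos_of_nonneg (one_div_nonpos.2 hρ)
    (Real.logb_nonneg one_lt_two (le_add_of_nonneg_right (by positivity)))

end Rate

theorem stmt_5_general (U I v p₀ pmax ρmin : ℝ)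
    (hU : 0 < U) (hI : 0 ≤ I) (hv : 0 < v) (hp₀ : 0 < p₀)
    (hρmin : ρmin ≤ 1)
    (g : ℝ → ℝ)
    (hganti : StrictAntiOn g (Set.Icc ρmin 1))
    (F : ℝ → ℝ → ℝ)
    (hF : ∀ ρ p, F ρ p = (1 / ρ) * Real.logb 2 (1 + U * p / (I + v)))
    (ρs ps : ℝ)
    (hfeas : ps + g ρs * p₀ ≤ pmax ∧ 0 ≤ ps ∧ ρmin ≤ ρs ∧ ρs ≤ 1)
    (hopt : ∀ ρ p : ℝ, p + g ρ * p₀ ≤ pmax → 0 ≤ p → ρmin ≤ ρ → ρ ≤ 1 →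
      F ρ p ≤ F ρs ps) :
    ps + g ρs * p₀ = pmax := by
  obtain ⟨hle, hps, hρl, hρu⟩ := hfeas
  have hc : 0 < I + v := by linarith
  refine hle.eq_of_not_lt fun hslack => ?_
  rcases lt_or_ge 0 ρs with hρpos | hρnonpos
  · have hopt' := hopt ρs (pmax - g ρs * p₀) (by linarith) (by linarith) hρl hρu
    have hrate := logb_one_add_mul_div_strictMonoOn hU hc (Set.mem_Ici.2 hps)
      (Set.mem_Ici.2 (by linarith : 0 ≤ pmax - g ρs * p₀)) (by linarith)
    rw [hF, hF] at hopt'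
    exact (mul_lt_mul_of_pos_left hrate (one_div_pos.2 hρpos)).not_ge hopt'
  · have hg : g 1 * p₀ < g ρs * p₀ :=
      mul_lt_mul_of_pos_right (hganti ⟨hρl, hρu⟩ ⟨hρmin, le_rfl⟩ (by linarith)) hp₀
    have hp : 0 < pmax - g 1 * p₀ := by linarith
    have hopt' := hopt 1 (pmax - g 1 * p₀) (by linarith) hp.le hρmin le_rfl
    rw [hF, hF, div_one, one_mul] at hopt'
    exact (logb_one_add_mul_div_pos hU hc hp).not_ge
      (hopt'.trans (one_div_mul_logb_one_add_nonpos hU hc hρnonpos hps))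

theorem stmt_5 (U I v p₀ pmax ρmin : ℝ)
    (hU : 0 < U) (hI : 0 ≤ I) (hv : 0 < v) (hp₀ : 0 < p₀) (hpmax : 0 < pmax)
    (hρmin : ρmin ≤ 1)
    (g : ℝ → ℝ) (hgc : ContinuousOn g (Set.Icc ρmin 1))
    (hganti : StrictAntiOn g (Set.Icc ρmin 1))
    (hgmin : g ρmin * p₀ ≥ pmax)
    (F : ℝ → ℝ → ℝ)
    (hF : ∀ ρ p, F ρ p = (1 / ρ) * Real.logb 2 (1 + U * p / (I + v)))
    (ρs ps : ℝ)
    (hfeas : ps + g ρs * p₀ ≤ pmax ∧ 0 ≤ ps ∧ ρmin ≤ ρs ∧ ρs ≤ 1)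
    (hopt : ∀ ρ p : ℝ, p + g ρ * p₀ ≤ pmax → 0 ≤ p → ρmin ≤ ρ → ρ ≤ 1 →
      F ρ p ≤ F ρs ps) :
    ps + g ρs * p₀ = pmax :=
  stmt_5_general U I v p₀ pmax ρmin hU hI hv hp₀ hρmin g hganti F hF ρs ps hfeas hopt
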